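/- arXiv:2308.03246 — 2 statements merged into one kernel-verified Lean document; each statement's English description precedes it below -/
import Mathlib

section
/- Let m ≥ 2 be an integer and consider the Freud weight w(x;t) = exp(−x^{2m} + t x²). For every n ≥ 0, the function t ↦ ln h_n(t) has derivative β_n(t) + β_{n+1}(t) at every t ∈ ℝ; equivalently, the derivative of t ↦ h_n(t) at t equals (β_n(t) + β_{n+1}(t)) h_n(t). -/
open MeasureTheory Real Filter

/-- The `j`-th moment of the Freud weight `exp(-x^(2m) + t*x^2)` on `ℝ`. -/
noncomputable def freudMoment (m : ℕ) (t : ℝ) (j : ℕ) : ℝ :=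
  ∫ x : ℝ, x ^ j * Real.exp (-x ^ (2 * m) + t * x ^ 2)

/-- The Hankel determinant `D_n(t)` of the moments of `exp(-x^(2m) + t*x^2)`. -/
noncomputable def hankelDet (m : ℕ) (t : ℝ) (n : ℕ) : ℝ :=
  (Matrix.of fun j k : Fin n => freudMoment m t ((j : ℕ) + (k : ℕ))).det

/-- The recurrence coefficient `β_n(t) = D_{n+1}(t) D_{n-1}(t) / D_n(t)^2`, with `β_0(t) = 0`. -/
noncomputable def betaCoef (m : ℕ) (t : ℝ) : ℕ → ℝ
  | 0 => 0
  | n + 1 => hankelDet m t (n + 2) * hankelDet m t n / (hankelDet m t (n + 1)) ^ 2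

/-- `h_n(t) = D_{n+1}(t) / D_n(t)`. -/
noncomputable def hQuantity (m : ℕ) (t : ℝ) (n : ℕ) : ℝ :=
  hankelDet m t (n + 1) / hankelDet m t n

/-!
Let `L` be the moment functional of the weight and `D_n` its Hankel determinants. Column `n` of the
adjugate of the Hankel matrix `H_{n+1}` is the coefficient vector of `Q_n = D_n P_n`, `P_n` the
monic orthogonal polynomial, and `H_{n+1} * adj H_{n+1} = D_{n+1} • 1` says exactly that
`L(X^l Q_n) = 0` for `l < n` and `L(X^n Q_n) = D_{n+1}`; positivity of the weight gives `D_n > 0`.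

Since `∂ₜ μ_j = μ_{j+2}`, differentiating `L_t(Q_n Q_n) = D_n D_{n+1}` yields
`D_n D_{n+1}' - D_n' D_{n+1} = L(X² Q_n Q_n)`. The weight is even, so `L(X Q_n Q_n) = 0` and the
three-term recurrence reads `X P_n = P_{n+1} + β_n P_{n-1}`; hence
`L(X² P_n P_n) = h_{n+1} + β_n² h_{n-1} = (β_n + β_{n+1}) h_n`, and dividing by `D_n²` gives
`h_n' = (β_n + β_{n+1}) h_n`.
-/

open Polynomial Topology

theorem Polynomial.coeff_comp_neg_X {R : Type*} [CommRing R] (p : R[X]) (i : ℕ) :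
    (p.comp (-X)).coeff i = (-1) ^ i * p.coeff i := by
  induction p using Polynomial.induction_on' with
  | add p q hp hq => rw [add_comp, coeff_add, coeff_add, hp, hq, mul_add]
  | monomial j a =>
    rw [monomial_comp, neg_pow, coeff_monomial, ← C_1, ← C_neg, ← C_pow, ← mul_assoc, ← C_mul,
      coeff_C_mul_X_pow]
    split_ifs <;> simp_all [mul_comm]

theorem Polynomial.C_neg_one_pow_mul_self {R : Type*} [CommRing R] (n : ℕ) :
    C ((-1 : R) ^ n) * C ((-1) ^ n) = 1 := by
  rw [← C_mul, ← pow_add, Even.neg_one_pow ⟨n, rfl⟩, C_1]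

noncomputable def momentFunctional (μ : ℕ → ℝ) : ℝ[X] →ₗ[ℝ] ℝ :=
  Polynomial.lsum fun j => μ j • LinearMap.id

section MomentFunctional

variable (μ : ℕ → ℝ)

theorem momentFunctional_monomial (j : ℕ) (a : ℝ) :
    momentFunctional μ (monomial j a) = a * μ j := by
  simp [momentFunctional, mul_comm]

theorem momentFunctional_C_mul (a : ℝ) (p : ℝ[X]) :
    momentFunctional μ (C a * p) = a * momentFunctional μ p := by
  rw [C_mul', map_smul, smul_eq_mul]

theorem momentFunctional_X_pow_mul (i : ℕ) (p : ℝ[X]) :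
    momentFunctional μ (X ^ i * p) = momentFunctional (fun j => μ (j + i)) p := by
  induction p using Polynomial.induction_on' with
  | add p q hp hq => rw [mul_add, map_add, map_add, hp, hq]
  | monomial j a => rw [X_pow_mul_monomial, momentFunctional_monomial, momentFunctional_monomial]

theorem momentFunctional_ofFn_mul_ofFn {N : ℕ} (a b : Fin N → ℝ) :
    momentFunctional μ (ofFn N a * ofFn N b) = ∑ j, ∑ k, a j * b k * μ (j + k) := by
  simp only [ofFn_eq_sum_monomial, Finset.sum_mul_sum, monomial_mul_monomial, map_sum,
    momentFunctional_monomial]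

theorem momentFunctional_comp_neg_X (hodd : ∀ j, Odd j → μ j = 0) (p : ℝ[X]) :
    momentFunctional μ (p.comp (-X)) = momentFunctional μ p := by
  induction p using Polynomial.induction_on' with
  | add p q hp hq => rw [add_comp, map_add, map_add, hp, hq]
  | monomial j a =>
    rw [monomial_comp, neg_pow, ← C_1, ← C_neg, ← C_pow, ← mul_assoc, ← C_mul,
      C_mul_X_pow_eq_monomial, momentFunctional_monomial, momentFunctional_monomial]
    rcases Nat.even_or_odd j with h | h
    · rw [h.neg_one_pow, mul_one]
    · rw [hodd j h, mul_zero, mul_zero]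

end MomentFunctional

def hankelMatrix (μ : ℕ → ℝ) (n : ℕ) : Matrix (Fin n) (Fin n) ℝ :=
  Matrix.of fun j k => μ (j + k)

-- Heine's formula: this is `D_n P_n`, with `P_n` the monic orthogonal polynomial of degree `n`.
noncomputable def orthoPoly (μ : ℕ → ℝ) (n : ℕ) : ℝ[X] :=
  ofFn (n + 1) fun k => (hankelMatrix μ (n + 1)).adjugate k (Fin.last n)

noncomputable def hankelBeta (μ : ℕ → ℝ) : ℕ → ℝ
  | 0 => 0
  | n + 1 =>
    (hankelMatrix μ (n + 2)).det * (hankelMatrix μ n).det / (hankelMatrix μ (n + 1)).det ^ 2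

section Hankel

variable (μ : ℕ → ℝ)

theorem orthoPoly_natDegree_le (n : ℕ) : (orthoPoly μ n).natDegree ≤ n :=
  Nat.le_of_lt_succ (ofFn_natDegree_lt (Nat.succ_pos n) _)

theorem hankelMatrix_adjugate_last_last (n : ℕ) :
    (hankelMatrix μ (n + 1)).adjugate (Fin.last n) (Fin.last n) = (hankelMatrix μ n).det := by
  rw [Matrix.adjugate_fin_succ_eq_det_submatrix, Fin.val_last, Even.neg_one_pow ⟨n, rfl⟩, one_mul]
  congr 1
  ext j k
  simp [hankelMatrix]

theorem orthoPoly_coeff_self (n : ℕ) : (orthoPoly μ n).coeff n = (hankelMatrix μ n).det :=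
  (ofFn_coeff_eq_val_of_lt _ n.lt_succ_self).trans (hankelMatrix_adjugate_last_last μ n)

theorem momentFunctional_X_pow_mul_orthoPoly {n l : ℕ} (hl : l ≤ n) :
    momentFunctional μ (X ^ l * orthoPoly μ n) =
      if l = n then (hankelMatrix μ (n + 1)).det else 0 := by
  have hH := congrFun (congrFun (Matrix.mul_adjugate (hankelMatrix μ (n + 1)))
    ⟨l, Nat.lt_succ_of_le hl⟩) (Fin.last n)
  simp only [Matrix.mul_apply, Matrix.smul_apply, Matrix.one_apply, Fin.ext_iff, Fin.val_last,
    smul_eq_mul, mul_ite, mul_one, mul_zero] at hH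
  rw [← hH, orthoPoly, ofFn_eq_sum_monomial, Finset.mul_sum, map_sum]
  refine Finset.sum_congr rfl fun k _ => ?_
  rw [X_pow_mul_monomial, momentFunctional_monomial, hankelMatrix, Matrix.of_apply, mul_comm,
    add_comm]

theorem momentFunctional_mul_orthoPoly {n : ℕ} {p : ℝ[X]} (hp : p.natDegree ≤ n) :
    momentFunctional μ (p * orthoPoly μ n) = p.coeff n * (hankelMatrix μ (n + 1)).det := by
  conv_lhs => rw [p.as_sum_range' (n + 1) (Nat.lt_succ_of_le hp)]
  rw [Finset.sum_mul, map_sum, Finset.sum_eq_single_of_mem n (Finset.self_mem_range_succ n)]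
  · rw [← C_mul_X_pow_eq_monomial, mul_assoc, momentFunctional_C_mul,
      momentFunctional_X_pow_mul_orthoPoly μ le_rfl, if_pos rfl]
  · intro i hi hin
    rw [← C_mul_X_pow_eq_monomial, mul_assoc, momentFunctional_C_mul,
      momentFunctional_X_pow_mul_orthoPoly μ (Nat.lt_succ_iff.mp (Finset.mem_range.mp hi)),
      if_neg hin, mul_zero]

theorem momentFunctional_orthoPoly_mul_self (n : ℕ) :
    momentFunctional μ (orthoPoly μ n * orthoPoly μ n) =
      (hankelMatrix μ n).det * (hankelMatrix μ (n + 1)).det := by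
  rw [momentFunctional_mul_orthoPoly μ (orthoPoly_natDegree_le μ n), orthoPoly_coeff_self]

theorem hankelMatrix_det_pos (hpos : ∀ p : ℝ[X], p ≠ 0 → 0 < momentFunctional μ (p * p)) :
    ∀ n, 0 < (hankelMatrix μ n).det
  | 0 => by simp
  | n + 1 => by
    have hD := hankelMatrix_det_pos hpos n
    have hQ : orthoPoly μ n ≠ 0 := fun h =>
      hD.ne (by simpa [h] using orthoPoly_coeff_self μ n)
    have := hpos _ hQ
    rw [momentFunctional_orthoPoly_mul_self] at this
    exact pos_of_mul_pos_right this hD.le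

end Hankel

-- `D_n D_{n+1} (X P_n - P_{n+1})`, which the three-term recurrence of a symmetric functional
-- identifies with `D_n D_{n+1} β_n P_{n-1}`.
noncomputable def recurrenceRemainder (μ : ℕ → ℝ) (n : ℕ) : ℝ[X] :=
  C (hankelMatrix μ (n + 1)).det * (X * orthoPoly μ n) -
    C (hankelMatrix μ n).det * orthoPoly μ (n + 1)

section Remainder

variable (μ : ℕ → ℝ)

theorem recurrenceRemainder_natDegree_le (n : ℕ) : (recurrenceRemainder μ n).natDegree ≤ n := by
  rw [natDegree_le_iff_coeff_eq_zero]
  rintro (_ | k) hk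
  · omega
  rw [recurrenceRemainder, coeff_sub, coeff_C_mul, coeff_C_mul, coeff_X_mul]
  rcases (Nat.lt_succ_iff.mp hk).eq_or_lt with rfl | hk
  · rw [orthoPoly_coeff_self, orthoPoly_coeff_self, mul_comm, sub_self]
  · rw [coeff_eq_zero_of_natDegree_lt ((orthoPoly_natDegree_le μ n).trans_lt hk),
      coeff_eq_zero_of_natDegree_lt ((orthoPoly_natDegree_le μ (n + 1)).trans_lt (by omega)),
      mul_zero, mul_zero, sub_zero]

theorem momentFunctional_mul_recurrenceRemainder_succ {k : ℕ} {p : ℝ[X]}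
    (hp : p.natDegree ≤ k) :
    momentFunctional μ (p * recurrenceRemainder μ (k + 1)) =
      p.coeff k * (hankelMatrix μ (k + 2)).det ^ 2 := by
  have hXp : (X * p).natDegree ≤ k + 1 :=
    (natDegree_mul_le_of_le natDegree_X_le hp).trans_eq (add_comm 1 k)
  rw [recurrenceRemainder, show ∀ a b q r : ℝ[X], p * (a * (X * q) - b * r) =
      a * (X * p * q) - b * (p * r) from fun _ _ _ _ => by ring, map_sub, momentFunctional_C_mul,
    momentFunctional_C_mul, momentFunctional_mul_orthoPoly μ hXp,
    momentFunctional_mul_orthoPoly μ (hp.trans (Nat.le_add_right k 2)), coeff_X_mul,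
    coeff_eq_zero_of_natDegree_lt (hp.trans_lt (by omega : k < k + 2))]
  ring

end Remainder

section Symmetric

variable {μ : ℕ → ℝ} (hpos : ∀ p : ℝ[X], p ≠ 0 → 0 < momentFunctional μ (p * p))
  (hodd : ∀ j, Odd j → μ j = 0)
include hpos hodd

theorem orthoPoly_comp_neg_X (n : ℕ) :
    (orthoPoly μ n).comp (-X) = C ((-1) ^ n) * orthoPoly μ n := by
  set Q := orthoPoly μ n
  have hQ := orthoPoly_natDegree_le μ n
  have hdeg : ∀ p : ℝ[X], (p.comp (-X)).natDegree = p.natDegree := by simp [natDegree_comp]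
  -- `S` has no term of degree `n`, so it is orthogonal to `Q` and `Q(-X)`, hence to itself.
  set S := C ((-1) ^ n) * Q.comp (-X) - Q
  have hS : S.natDegree ≤ n := (natDegree_sub_le_of_le
    ((natDegree_C_mul_le _ _).trans ((hdeg Q).trans_le hQ)) hQ).trans (max_self n).le
  have hSn : S.coeff n = 0 := by
    simp only [S, coeff_sub, coeff_C_mul, coeff_comp_neg_X, ← mul_assoc, ← pow_add, ← two_mul,
      pow_mul, neg_one_sq, one_pow, one_mul, sub_self]
  have hSQ : momentFunctional μ (S * Q) = 0 := by
    rw [momentFunctional_mul_orthoPoly μ hS, hSn, zero_mul]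
  have hSQ' : momentFunctional μ (S * Q.comp (-X)) = 0 := by
    rw [← momentFunctional_comp_neg_X μ hodd, mul_comp, comp_neg_X_comp_neg_X,
      momentFunctional_mul_orthoPoly μ ((hdeg S).trans_le hS), coeff_comp_neg_X, hSn, mul_zero,
      zero_mul]
  have hS0 : S = 0 := by
    by_contra hS0
    have := hpos S hS0
    rw [show S * S = C ((-1) ^ n) * (S * Q.comp (-X)) - S * Q by ring, map_sub,
      momentFunctional_C_mul, hSQ, hSQ'] at this
    simp at this
  calc Q.comp (-X) = C ((-1) ^ n) * (C ((-1) ^ n) * Q.comp (-X)) := by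
        rw [← mul_assoc, C_neg_one_pow_mul_self, one_mul]
    _ = C ((-1) ^ n) * Q := by rw [sub_eq_zero.mp hS0]

theorem momentFunctional_X_mul_orthoPoly_mul_self (n : ℕ) :
    momentFunctional μ (X * orthoPoly μ n * orthoPoly μ n) = 0 := by
  have h := momentFunctional_comp_neg_X μ hodd (X * orthoPoly μ n * orthoPoly μ n)
  rw [mul_comp, mul_comp, X_comp, orthoPoly_comp_neg_X hpos hodd,
    show -X * (C ((-1) ^ n) * orthoPoly μ n) * (C ((-1) ^ n) * orthoPoly μ n) =
      -(C ((-1) ^ n) * C ((-1) ^ n) * (X * orthoPoly μ n * orthoPoly μ n)) by ring,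
    C_neg_one_pow_mul_self, one_mul, map_neg] at h
  linarith

theorem recurrenceRemainder_coeff_self (n : ℕ) : (recurrenceRemainder μ n).coeff n = 0 := by
  have h : momentFunctional μ (recurrenceRemainder μ n * orthoPoly μ n) = 0 := by
    rw [recurrenceRemainder, show ∀ a b q q' : ℝ[X], (a * (X * q) - b * q') * q =
        a * (X * q * q) - b * (q * q') from fun _ _ _ _ => by ring,
      map_sub, momentFunctional_C_mul, momentFunctional_C_mul,
      momentFunctional_X_mul_orthoPoly_mul_self hpos hodd,
      momentFunctional_mul_orthoPoly μ ((orthoPoly_natDegree_le μ n).trans n.le_succ),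
      coeff_eq_zero_of_natDegree_lt ((orthoPoly_natDegree_le μ n).trans_lt n.lt_succ_self)]
    ring
  rw [momentFunctional_mul_orthoPoly μ (recurrenceRemainder_natDegree_le μ n)] at h
  exact (mul_eq_zero.mp h).resolve_right (hankelMatrix_det_pos μ hpos (n + 1)).ne'

theorem recurrenceRemainder_zero : recurrenceRemainder μ 0 = 0 := by
  rw [eq_C_of_natDegree_le_zero (recurrenceRemainder_natDegree_le μ 0),
    recurrenceRemainder_coeff_self hpos hodd, C_0]

theorem recurrenceRemainder_succ_natDegree_le (k : ℕ) :
    (recurrenceRemainder μ (k + 1)).natDegree ≤ k := by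
  rw [natDegree_le_iff_coeff_eq_zero]
  intro N hN
  rcases (Nat.succ_le_of_lt hN).eq_or_lt with rfl | hN
  · exact recurrenceRemainder_coeff_self hpos hodd (k + 1)
  · exact coeff_eq_zero_of_natDegree_lt
      ((recurrenceRemainder_natDegree_le μ (k + 1)).trans_lt hN)

theorem momentFunctional_recurrenceRemainder_mul_self (n : ℕ) :
    momentFunctional μ (recurrenceRemainder μ n * recurrenceRemainder μ n) =
      hankelBeta μ n * (hankelMatrix μ n).det * (hankelMatrix μ (n + 1)).det ^ 3 := by
  cases n with
  | zero => simp [recurrenceRemainder_zero hpos hodd, hankelBeta]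
  | succ k =>
    have hR := recurrenceRemainder_succ_natDegree_le hpos hodd k
    have hcoeff := momentFunctional_mul_recurrenceRemainder_succ μ (orthoPoly_natDegree_le μ k)
    rw [mul_comm, momentFunctional_mul_orthoPoly μ hR, orthoPoly_coeff_self] at hcoeff
    have hD := hankelMatrix_det_pos μ hpos (k + 1)
    rw [momentFunctional_mul_recurrenceRemainder_succ μ hR, hankelBeta]
    field_simp
    linear_combination (hankelMatrix μ (k + 2)).det ^ 2 * hcoeff

theorem momentFunctional_X_sq_mul_orthoPoly_mul_self (n : ℕ) :
    momentFunctional μ (X ^ 2 * orthoPoly μ n * orthoPoly μ n) =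
      (hankelBeta μ n + hankelBeta μ (n + 1)) * (hankelMatrix μ n).det *
        (hankelMatrix μ (n + 1)).det := by
  -- Square `D_{n+1} X Q_n = R_n + D_n Q_{n+1}`; the cross term vanishes since `deg R_n ≤ n`.
  have hRR := momentFunctional_recurrenceRemainder_mul_self hpos hodd n
  have hQQ := momentFunctional_orthoPoly_mul_self μ (n + 1)
  have hR := recurrenceRemainder_natDegree_le μ n
  set R := recurrenceRemainder μ n
  set D₀ := (hankelMatrix μ n).det
  set D₁ := (hankelMatrix μ (n + 1)).det
  set Q := orthoPoly μ n
  set Q' := orthoPoly μ (n + 1)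
  have hsq : C (D₁ ^ 2) * (X ^ 2 * Q * Q) =
      R * R + C D₀ * (R * Q') + C D₀ * (R * Q') + C (D₀ ^ 2) * (Q' * Q') := by
    simp only [R, recurrenceRemainder, C_pow]
    ring
  have hRQ' : momentFunctional μ (R * Q') = 0 := by
    rw [momentFunctional_mul_orthoPoly μ (hR.trans n.le_succ),
      coeff_eq_zero_of_natDegree_lt (hR.trans_lt n.lt_succ_self), zero_mul]
  have h := congrArg (momentFunctional μ) hsq
  simp only [map_add, momentFunctional_C_mul, hRQ', hRR, hQQ] at h
  have hD := hankelMatrix_det_pos μ hpos (n + 1)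
  rw [hankelBeta]
  field_simp
  linear_combination h

end Symmetric

section Deformation

theorem DifferentiableAt.matrix_det {ι : Type*} [Fintype ι] [DecidableEq ι]
    {f : ℝ → Matrix ι ι ℝ} {t : ℝ} (hf : ∀ i j, DifferentiableAt ℝ (fun s => f s i j) t) :
    DifferentiableAt ℝ (fun s => (f s).det) t := by
  simp only [Matrix.det_apply]
  exact DifferentiableAt.fun_sum fun σ _ =>
    (DifferentiableAt.fun_finsetProd fun i _ => hf _ _).const_smul _

theorem DifferentiableAt.matrix_adjugate {ι : Type*} [Fintype ι] [DecidableEq ι]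
    {f : ℝ → Matrix ι ι ℝ} {t : ℝ} (hf : ∀ i j, DifferentiableAt ℝ (fun s => f s i j) t)
    (i j : ι) : DifferentiableAt ℝ (fun s => (f s).adjugate i j) t := by
  simp only [Matrix.adjugate_apply]
  refine DifferentiableAt.matrix_det fun k l => ?_
  by_cases hk : k = j
  · simp [hk]
  · simpa [Matrix.updateRow_ne hk] using hf k l

variable {μ : ℝ → ℕ → ℝ} {t : ℝ} (hμ : ∀ j, HasDerivAt (fun s => μ s j) (μ t (j + 2)) t)
include hμ

theorem hasDerivAt_momentFunctional_ofFn_mul_ofFn {N : ℕ} {a b : Fin N → ℝ → ℝ}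
    {a' b' : Fin N → ℝ} (ha : ∀ k, HasDerivAt (a k) (a' k) t)
    (hb : ∀ k, HasDerivAt (b k) (b' k) t) :
    HasDerivAt (fun s => momentFunctional (μ s) (ofFn N (a · s) * ofFn N (b · s)))
      (momentFunctional (μ t) (ofFn N a' * ofFn N (b · t)) +
        momentFunctional (μ t) (ofFn N (a · t) * ofFn N b') +
        momentFunctional (μ t) (X ^ 2 * (ofFn N (a · t) * ofFn N (b · t)))) t := by
  simp only [momentFunctional_X_pow_mul, momentFunctional_ofFn_mul_ofFn,
    ← Finset.sum_add_distrib]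
  refine HasDerivAt.fun_sum fun j _ => HasDerivAt.fun_sum fun k _ => ?_
  exact (((ha j).fun_mul (hb k)).fun_mul (hμ (j + k))).congr_deriv (by ring)

theorem differentiableAt_hankelMatrix_det (n : ℕ) :
    DifferentiableAt ℝ (fun s => (hankelMatrix (μ s) n).det) t :=
  DifferentiableAt.matrix_det fun _ _ => (hμ _).differentiableAt

theorem hankelMatrix_det_mul_deriv_sub_deriv_mul (n : ℕ) :
    (hankelMatrix (μ t) n).det * deriv (fun s => (hankelMatrix (μ s) (n + 1)).det) t -
        deriv (fun s => (hankelMatrix (μ s) n).det) t * (hankelMatrix (μ t) (n + 1)).det =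
      momentFunctional (μ t) (X ^ 2 * orthoPoly (μ t) n * orthoPoly (μ t) n) := by
  -- The coefficients of `Q_n` move with `s`; their derivatives form a polynomial `Q'` of degree
  -- `≤ n` with leading coefficient `D_n'`, which pairs with `Q_n` to `D_n' D_{n+1}`.
  set a : Fin (n + 1) → ℝ → ℝ := fun k s => (hankelMatrix (μ s) (n + 1)).adjugate k (Fin.last n)
  have ha : ∀ k, HasDerivAt (a k) (deriv (a k) t) t := fun k =>
    (DifferentiableAt.matrix_adjugate (fun _ _ => (hμ _).differentiableAt) k _).hasDerivAt
  have hlast : a (Fin.last n) = fun s => (hankelMatrix (μ s) n).det :=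
    funext fun s => hankelMatrix_adjugate_last_last (μ s) n
  set Q' := ofFn (n + 1) fun k => deriv (a k) t
  have hQ' : momentFunctional (μ t) (Q' * orthoPoly (μ t) n) =
      deriv (fun s => (hankelMatrix (μ s) n).det) t * (hankelMatrix (μ t) (n + 1)).det := by
    rw [momentFunctional_mul_orthoPoly _ (Nat.le_of_lt_succ (ofFn_natDegree_lt n.succ_pos _)),
      ofFn_coeff_eq_val_of_lt _ n.lt_succ_self]
    exact congrArg (deriv · t * _) hlast
  have h₁ : HasDerivAt
      (fun s => momentFunctional (μ s) (orthoPoly (μ s) n * orthoPoly (μ s) n))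
      (momentFunctional (μ t) (Q' * orthoPoly (μ t) n) +
        momentFunctional (μ t) (orthoPoly (μ t) n * Q') +
        momentFunctional (μ t) (X ^ 2 * (orthoPoly (μ t) n * orthoPoly (μ t) n))) t :=
    hasDerivAt_momentFunctional_ofFn_mul_ofFn hμ ha ha
  have h₂ : HasDerivAt (fun s => momentFunctional (μ s) (orthoPoly (μ s) n * orthoPoly (μ s) n))
      (deriv (fun s => (hankelMatrix (μ s) n).det) t * (hankelMatrix (μ t) (n + 1)).det +
        (hankelMatrix (μ t) n).det * deriv (fun s => (hankelMatrix (μ s) (n + 1)).det) t) t := by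
    simp only [momentFunctional_orthoPoly_mul_self]
    exact (differentiableAt_hankelMatrix_det hμ n).hasDerivAt.mul
      (differentiableAt_hankelMatrix_det hμ (n + 1)).hasDerivAt
  have h := h₁.unique h₂
  rw [mul_comm _ Q', hQ', ← mul_assoc] at h
  linarith

end Deformation

section Weight

variable {w : ℝ → ℝ}

theorem integral_pow_mul_eq_zero_of_odd (heven : ∀ x, w (-x) = w x) {j : ℕ} (hj : Odd j) :
    ∫ x, x ^ j * w x = 0 := by
  have h := integral_neg_eq_self (fun x => x ^ j * w x) volume
  simp only [hj.neg_pow, heven, neg_mul, integral_neg] at h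
  linarith

variable (hw : ∀ j, Integrable (fun x => x ^ j * w x))
include hw

theorem integrable_eval_mul (p : ℝ[X]) : Integrable (fun x => p.eval x * w x) := by
  induction p using Polynomial.induction_on' with
  | add p q hp hq => exact (hp.add hq).congr (ae_of_all _ fun x => by simp [add_mul])
  | monomial j a => simpa [mul_assoc] using (hw j).const_mul a

theorem momentFunctional_eq_integral (p : ℝ[X]) :
    momentFunctional (fun j => ∫ x, x ^ j * w x) p = ∫ x, p.eval x * w x := by
  induction p using Polynomial.induction_on' with
  | add p q hp hq =>
    rw [map_add, hp, hq, ← integral_add (integrable_eval_mul hw p) (integrable_eval_mul hw q)]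
    simp only [eval_add, add_mul]
  | monomial j a =>
    rw [momentFunctional_monomial, ← integral_const_mul]
    simp only [eval_monomial, mul_assoc]

theorem momentFunctional_mul_self_pos (hc : Continuous w) (hpos : ∀ x, 0 < w x) {p : ℝ[X]}
    (hp : p ≠ 0) : 0 < momentFunctional (fun j => ∫ x, x ^ j * w x) (p * p) := by
  obtain ⟨x, hx⟩ : ∃ x, p.eval x ≠ 0 := by
    by_contra! h
    exact hp (Polynomial.funext fun x => by simpa using h x)
  rw [momentFunctional_eq_integral hw, integral_pos_iff_support_of_nonneg
    (fun x => by simpa using mul_nonneg (mul_self_nonneg (p.eval x)) (hpos x).le)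
    (integrable_eval_mul hw _)]
  refine IsOpen.measure_pos volume (Continuous.isOpen_support (by fun_prop)) ⟨x, ?_⟩
  simp [hx, (hpos x).ne']

end Weight

section Freud

variable {m : ℕ} (hm : 2 ≤ m)
include hm

theorem freud_exponent_le {s T : ℝ} (hs : s ≤ T) (x : ℝ) :
    -x ^ (2 * m) + s * x ^ 2 ≤ 1 + (T + 1) ^ 2 / 4 - x ^ 2 := by
  have hquartic : x ^ 4 - 1 ≤ x ^ (2 * m) := by
    rw [pow_mul]
    rcases le_or_gt 1 (x ^ 2) with h | h
    · have := pow_le_pow_right₀ h hm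
      nlinarith
    · have := pow_nonneg (sq_nonneg x) m
      nlinarith
  have := mul_le_mul_of_nonneg_right hs (sq_nonneg x)
  nlinarith [sq_nonneg (x ^ 2 - (T + 1) / 2)]

theorem abs_pow_mul_freudWeight_le {s T : ℝ} (hs : s ≤ T) (j : ℕ) (x : ℝ) :
    |x ^ j * exp (-x ^ (2 * m) + s * x ^ 2)| ≤
      exp (1 + (T + 1) ^ 2 / 4) * (|x| ^ j * exp (-x ^ 2)) := by
  rw [abs_mul, abs_pow, abs_of_pos (exp_pos _), mul_left_comm, ← exp_add]
  exact mul_le_mul_of_nonneg_left (exp_le_exp.mpr (by linarith [freud_exponent_le hm hs x]))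
    (by positivity)

omit hm in
theorem integrable_abs_pow_mul_exp_neg_sq (j : ℕ) :
    Integrable fun x : ℝ => |x| ^ j * exp (-x ^ 2) := by
  have hj : (-1 : ℝ) < j := by linarith [j.cast_nonneg (α := ℝ)]
  simpa [rpow_natCast, abs_mul, abs_pow] using
    (integrable_rpow_mul_exp_neg_mul_sq one_pos hj).abs

theorem integrable_pow_mul_freudWeight (s : ℝ) (j : ℕ) :
    Integrable fun x => x ^ j * exp (-x ^ (2 * m) + s * x ^ 2) :=
  ((integrable_abs_pow_mul_exp_neg_sq j).const_mul _).mono' (by fun_prop)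
    (ae_of_all _ fun x => abs_pow_mul_freudWeight_le hm le_rfl j x)

theorem hasDerivAt_freudMoment (t : ℝ) (j : ℕ) :
    HasDerivAt (fun s => freudMoment m s j) (freudMoment m t (j + 2)) t := by
  have hnhds : Set.Iio (|t| + 1) ∈ 𝓝 t := Iio_mem_nhds (by linarith [le_abs_self t])
  refine (hasDerivAt_integral_of_dominated_loc_of_deriv_le hnhds
    (Eventually.of_forall fun s => (integrable_pow_mul_freudWeight hm s j).aestronglyMeasurable)
    (integrable_pow_mul_freudWeight hm t j)
    (integrable_pow_mul_freudWeight hm t (j + 2)).aestronglyMeasurable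
    (ae_of_all _ fun x s hs => abs_pow_mul_freudWeight_le hm (le_of_lt hs) (j + 2) x)
    ((integrable_abs_pow_mul_exp_neg_sq (j + 2)).const_mul _)
    (ae_of_all _ fun x s _ => ?_)).2
  have := (((hasDerivAt_id s).mul_const (x ^ 2)).const_add (-x ^ (2 * m))).exp.const_mul (x ^ j)
  exact this.congr_deriv (by simp only [id, one_mul]; ring)

end Freud

theorem hankelDet_eq_det_hankelMatrix (m : ℕ) (t : ℝ) (n : ℕ) :
    hankelDet m t n = (hankelMatrix (freudMoment m t) n).det := rfl

theorem betaCoef_eq_hankelBeta (m : ℕ) (t : ℝ) :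
    ∀ n, betaCoef m t n = hankelBeta (freudMoment m t) n
  | 0 => rfl
  | _ + 1 => rfl

theorem stmt12 (m : ℕ) (hm : 2 ≤ m) (n : ℕ) (t : ℝ) :
    HasDerivAt (fun s : ℝ => Real.log (hQuantity m s n))
      (betaCoef m t n + betaCoef m t (n + 1)) t ∧
    HasDerivAt (fun s : ℝ => hQuantity m s n)
      ((betaCoef m t n + betaCoef m t (n + 1)) * hQuantity m t n) t := by
  have hpos : ∀ p : ℝ[X], p ≠ 0 → 0 < momentFunctional (freudMoment m t) (p * p) :=
    fun _ => momentFunctional_mul_self_pos (integrable_pow_mul_freudWeight hm t) (by fun_prop)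
      (fun _ => exp_pos _)
  have hodd : ∀ j, Odd j → freudMoment m t j = 0 := fun _ =>
    integral_pow_mul_eq_zero_of_odd fun x => by rw [neg_sq, (even_two_mul m).neg_pow]
  have hμ := hasDerivAt_freudMoment hm t
  have hD₀ := hankelMatrix_det_pos _ hpos n
  have hD₁ := hankelMatrix_det_pos _ hpos (n + 1)
  have hW := hankelMatrix_det_mul_deriv_sub_deriv_mul hμ n
  rw [momentFunctional_X_sq_mul_orthoPoly_mul_self hpos hodd] at hW
  have hh : HasDerivAt (fun s => hQuantity m s n)
      ((betaCoef m t n + betaCoef m t (n + 1)) * hQuantity m t n) t := by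
    refine ((differentiableAt_hankelMatrix_det hμ (n + 1)).hasDerivAt.div
      (differentiableAt_hankelMatrix_det hμ n).hasDerivAt hD₀.ne').congr_deriv ?_
    rw [hQuantity, hankelDet_eq_det_hankelMatrix, hankelDet_eq_det_hankelMatrix,
      betaCoef_eq_hankelBeta, betaCoef_eq_hankelBeta]
    field_simp
    linear_combination hW
  have hq : hQuantity m t n ≠ 0 := (div_pos hD₁ hD₀).ne'
  exact ⟨(hh.log hq).congr_deriv (mul_div_cancel_right₀ _ hq), hh⟩
end

section
/- For the Freud weight w(x;t) = exp(−x⁴ + t x²) with t ∈ ℝ, the recurrence coefficients satisfy the discrete Painlevé I equation: for every n ≥ 1, 4 β_n(t)(β_{n−1}(t) + β_n(t) + β_{n+1}(t) − t/2) = n. -/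
/-!
The moment functional `L p = ∫ p(x) w(x) dx` of the Freud weight is even, positive definite and
satisfies `L p' = L ((4x³ - 2tx) p)`, by integration by parts against `w' = (-4x³ + 2tx) w`.
Evenness makes `P n` even or odd with `n`, so the three-term recurrence has no diagonal term:
`x P_n = P_{n+1} + β_n P_{n-1}`. Apply the integration by parts identity to `P_n P_{n-1}`: the
left side is `n h_{n-1}` since `P_n' = n x^{n-1} + …`, while the recurrence gives
`L (x P_n P_{n-1}) = h_n` and `L (x³ P_n P_{n-1}) = (β_{n-1} + β_n + β_{n+1}) h_n`.
Dividing by `h_{n-1}` gives the equation.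
-/

open MeasureTheory Real Polynomial

open scoped Nat

section Orthogonality

variable {K : Type*} [Field K]

theorem LinearMap.map_C_mul (L : K[X] →ₗ[K] K) (c : K) (p : K[X]) :
    L (C c * p) = c * L p := by
  rw [C_mul', map_smul, smul_eq_mul]

structure IsMonicOrthogonal (L : K[X] →ₗ[K] K) (P : ℕ → K[X]) : Prop where
  monic : ∀ n, (P n).Monic
  natDegree_eq : ∀ n, (P n).natDegree = n
  apply_mul_eq_zero : ∀ j k, j ≠ k → L (P j * P k) = 0
  apply_mul_self_ne_zero : ∀ n, L (P n * P n) ≠ 0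

noncomputable def recurrenceCoeff (L : K[X] →ₗ[K] K) (P : ℕ → K[X]) : ℕ → K
  | 0 => 0
  | n + 1 => L (P (n + 1) * P (n + 1)) / L (P n * P n)

namespace IsMonicOrthogonal

variable {L : K[X] →ₗ[K] K} {P : ℕ → K[X]}

theorem degree_eq (hP : IsMonicOrthogonal L P) (n : ℕ) : (P n).degree = n := by
  rw [degree_eq_natDegree (hP.monic n).ne_zero, hP.natDegree_eq]

theorem coeff_eq_one (hP : IsMonicOrthogonal L P) (n : ℕ) : (P n).coeff n = 1 := by
  simpa [hP.natDegree_eq] using (hP.monic n).coeff_natDegree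

theorem degree_sub_C_mul_lt (hP : IsMonicOrthogonal L P) {q : K[X]} {n : ℕ}
    (hq : q.natDegree ≤ n) : (q - C (q.coeff n) * P n).degree < n := by
  rw [degree_lt_iff_coeff_zero]
  intro m hm
  rw [coeff_sub, coeff_C_mul]
  rcases hm.lt_or_eq with hm | rfl
  · have hPm : (P n).natDegree < m := by rwa [hP.natDegree_eq]
    rw [coeff_eq_zero_of_natDegree_lt (hq.trans_lt hm), coeff_eq_zero_of_natDegree_lt hPm,
      mul_zero, sub_zero]
  · rw [hP.coeff_eq_one, mul_one, sub_self]

theorem apply_mul_eq_zero_of_degree_lt (hP : IsMonicOrthogonal L P) {q : K[X]} {n : ℕ}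
    (hq : q.degree < n) : L (q * P n) = 0 := by
  suffices ∀ k ≤ n, ∀ q : K[X], q.degree < k → L (q * P n) = 0 from this n le_rfl q hq
  intro k
  induction k with
  | zero =>
    intro _ q hq
    rw [Nat.cast_zero, Nat.WithBot.lt_zero_iff, degree_eq_bot] at hq
    rw [hq, zero_mul, map_zero]
  | succ k ih =>
    intro hk q hq
    have hqk : q.natDegree ≤ k := natDegree_le_of_degree_le (Order.le_of_lt_succ hq)
    calc L (q * P n) = q.coeff k * L (P k * P n) + L ((q - C (q.coeff k) * P k) * P n) := by
          rw [← L.map_C_mul, ← map_add]; ring_nf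
      _ = 0 := by
          rw [hP.apply_mul_eq_zero k n (by omega), ih (by omega) _ (hP.degree_sub_C_mul_lt hqk),
            mul_zero, add_zero]

theorem apply_mul_eq_coeff_mul (hP : IsMonicOrthogonal L P) {q : K[X]} {n : ℕ}
    (hq : q.natDegree ≤ n) : L (q * P n) = q.coeff n * L (P n * P n) := by
  calc L (q * P n) = q.coeff n * L (P n * P n) + L ((q - C (q.coeff n) * P n) * P n) := by
        rw [← L.map_C_mul, ← map_add]; ring_nf
    _ = q.coeff n * L (P n * P n) := by
        rw [hP.apply_mul_eq_zero_of_degree_lt (hP.degree_sub_C_mul_lt hq), add_zero]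

theorem eq_zero_of_forall_apply_mul_eq_zero (hP : IsMonicOrthogonal L P) {q : K[X]} {n : ℕ}
    (hq : q.degree < n) (horth : ∀ k < n, L (q * P k) = 0) : q = 0 := by
  by_contra hq0
  have hlt : q.natDegree < n := (natDegree_lt_iff_degree_lt hq0).2 hq
  have := horth _ hlt
  rw [hP.apply_mul_eq_coeff_mul le_rfl, coeff_natDegree] at this
  exact mul_ne_zero (leadingCoeff_ne_zero.2 hq0) (hP.apply_mul_self_ne_zero _) this

theorem eq_of_monic_of_forall_apply_mul_eq_zero (hP : IsMonicOrthogonal L P) {Q : K[X]} {n : ℕ}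
    (hQ : Q.Monic) (hQn : Q.natDegree = n) (horth : ∀ k < n, L (Q * P k) = 0) : Q = P n := by
  refine sub_eq_zero.1 (hP.eq_zero_of_forall_apply_mul_eq_zero (n := n) ?_ fun k hk => ?_)
  · have hdeg : Q.degree = (P n).degree := by
      rw [hP.degree_eq, degree_eq_natDegree hQ.ne_zero, hQn]
    simpa [hdeg, hP.degree_eq] using
      degree_sub_lt_left hdeg hQ.ne_zero (by rw [hQ.leadingCoeff, (hP.monic n).leadingCoeff])
  · rw [sub_mul, map_sub, horth k hk, hP.apply_mul_eq_zero n k hk.ne', sub_zero]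

theorem apply_X_pow_mul_mul_add (hP : IsMonicOrthogonal L P) (j k : ℕ) :
    L (X ^ j * P k * P (k + j)) = L (P (k + j) * P (k + j)) := by
  have hdeg : (X ^ j * P k).natDegree ≤ k + j :=
    natDegree_mul_le.trans (by rw [natDegree_X_pow, hP.natDegree_eq, add_comm])
  rw [hP.apply_mul_eq_coeff_mul hdeg, coeff_X_pow_mul, hP.coeff_eq_one, one_mul]

theorem apply_X_mul_mul_succ (hP : IsMonicOrthogonal L P) (k : ℕ) :
    L (X * P k * P (k + 1)) = L (P (k + 1) * P (k + 1)) := by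
  simpa using hP.apply_X_pow_mul_mul_add 1 k

theorem apply_mul_self_succ (hP : IsMonicOrthogonal L P) (n : ℕ) :
    L (P (n + 1) * P (n + 1)) = recurrenceCoeff L P (n + 1) * L (P n * P n) :=
  (div_mul_cancel₀ _ (hP.apply_mul_self_ne_zero n)).symm

theorem comp_neg_X (hP : IsMonicOrthogonal L P) (hsymm : ∀ p, L (p.comp (-X)) = L p) (n : ℕ) :
    (P n).comp (-X) = C ((-1) ^ n) * P n := by
  have hsq : ((-1 : K) ^ n) * (-1) ^ n = 1 := by rw [← mul_pow]; norm_num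
  have hnegX : (-X : K[X]).natDegree = 1 := by rw [natDegree_neg, natDegree_X]
  have hcomp : ∀ k, ((P k).comp (-X)).natDegree = k := by
    intro k; rw [natDegree_comp, hnegX, mul_one, hP.natDegree_eq]
  suffices C ((-1) ^ n) * (P n).comp (-X) = P n by
    calc (P n).comp (-X) = C ((-1) ^ n * (-1) ^ n) * (P n).comp (-X) := by
          rw [hsq, C_1, one_mul]
      _ = C ((-1) ^ n) * P n := by rw [C_mul, mul_assoc, this]
  refine hP.eq_of_monic_of_forall_apply_mul_eq_zero ?_ ?_ fun k hk => ?_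
  · rw [Monic, leadingCoeff_mul, leadingCoeff_C,
      leadingCoeff_comp (by rw [hnegX]; exact one_ne_zero), (hP.monic n).leadingCoeff,
      hP.natDegree_eq, leadingCoeff_neg, leadingCoeff_X, one_mul, hsq]
  · rw [natDegree_C_mul (pow_ne_zero _ (neg_ne_zero.2 one_ne_zero)), hcomp]
  · have hdeg : ((P k).comp (-X)).degree < n := by
      refine degree_le_natDegree.trans_lt ?_
      rw [hcomp]; exact_mod_cast hk
    rw [mul_assoc, L.map_C_mul, ← hsymm, mul_comp, comp_assoc]
    simp only [neg_comp, X_comp, neg_neg, comp_X]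
    rw [mul_comm (P n), hP.apply_mul_eq_zero_of_degree_lt hdeg, mul_zero]

theorem apply_X_mul_mul_self_eq_zero [CharZero K] (hP : IsMonicOrthogonal L P)
    (hsymm : ∀ p, L (p.comp (-X)) = L p) (n : ℕ) : L (X * (P n * P n)) = 0 := by
  have hsq : ((-1 : K) ^ n) * (-1) ^ n = 1 := by rw [← mul_pow]; norm_num
  have hodd : L (X * (P n * P n)) = -L (X * (P n * P n)) := by
    conv_lhs => rw [← hsymm, mul_comp, mul_comp, X_comp, hP.comp_neg_X hsymm]
    calc L (-X * (C ((-1 : K) ^ n) * P n * (C ((-1) ^ n) * P n)))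
        = L (-(C ((-1 : K) ^ n * (-1) ^ n) * (X * (P n * P n)))) := by rw [C_mul]; ring_nf
      _ = -L (X * (P n * P n)) := by rw [hsq, C_1, one_mul, map_neg]
  exact CharZero.eq_neg_self_iff.1 hodd

theorem X_mul_eq_add_C_mul [CharZero K] (hP : IsMonicOrthogonal L P)
    (hsymm : ∀ p, L (p.comp (-X)) = L p) (m : ℕ) :
    X * P m = P (m + 1) + C (recurrenceCoeff L P m) * P (m - 1) := by
  set β := recurrenceCoeff L P
  have hXm : (X * P m).natDegree = m + 1 := by
    rw [natDegree_X_mul (hP.monic m).ne_zero, hP.natDegree_eq]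
  have hlow : (C (β m) * P (m - 1)).natDegree < (X * P m).natDegree :=
    (natDegree_C_mul_le _ _).trans_lt (by rw [hXm, hP.natDegree_eq]; omega)
  suffices X * P m - C (β m) * P (m - 1) = P (m + 1) by rw [← this, sub_add_cancel]
  refine hP.eq_of_monic_of_forall_apply_mul_eq_zero
    ((monic_X.mul (hP.monic m)).sub_of_left (degree_lt_degree hlow))
    (by rw [natDegree_sub_eq_left_of_natDegree_lt hlow, hXm]) fun k hk => ?_
  rw [sub_mul, map_sub, mul_assoc (C _), L.map_C_mul, sub_eq_zero]
  rcases (Nat.lt_succ_iff.1 hk).eq_or_lt with rfl | hkm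
  · rw [mul_assoc, hP.apply_X_mul_mul_self_eq_zero hsymm]
    cases k with
    | zero => simp [β, recurrenceCoeff]
    | succ j => rw [Nat.add_sub_cancel, hP.apply_mul_eq_zero j (j + 1) (by omega), mul_zero]
  obtain ⟨j, rfl⟩ : ∃ j, m = j + 1 := ⟨m - 1, by omega⟩
  rw [Nat.add_sub_cancel]
  rcases (Nat.lt_succ_iff.1 hkm).eq_or_lt with rfl | hkj
  · rw [← hP.apply_mul_self_succ, mul_right_comm, hP.apply_X_mul_mul_succ]
  · have hdeg : (X * P k).degree < ↑(j + 1) := by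
      refine degree_lt_degree ?_ |>.trans_eq (hP.degree_eq _)
      rw [natDegree_X_mul (hP.monic k).ne_zero, hP.natDegree_eq, hP.natDegree_eq]
      omega
    rw [hP.apply_mul_eq_zero j k hkj.ne', mul_zero, mul_right_comm,
      hP.apply_mul_eq_zero_of_degree_lt hdeg]

theorem apply_X_pow_three_mul_mul_succ [CharZero K] (hP : IsMonicOrthogonal L P)
    (hsymm : ∀ p, L (p.comp (-X)) = L p) (m : ℕ) :
    L (X ^ 3 * (P (m + 1) * P m)) = (recurrenceCoeff L P m + recurrenceCoeff L P (m + 1)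
      + recurrenceCoeff L P (m + 2)) * L (P (m + 1) * P (m + 1)) := by
  have hrec := hP.X_mul_eq_add_C_mul hsymm m
  have hrec' := hP.X_mul_eq_add_C_mul hsymm (m + 1)
  rw [Nat.add_sub_cancel] at hrec'
  set β := recurrenceCoeff L P
  have hXX : L (X * P (m + 1) * (X * P (m + 1))) =
      (β (m + 1) + β (m + 2)) * L (P (m + 1) * P (m + 1)) := by
    calc L (X * P (m + 1) * (X * P (m + 1)))
        = L (X * P (m + 1) * P (m + 2)) + β (m + 1) * L (X * P m * P (m + 1)) := by
          nth_rewrite 2 [hrec']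
          rw [← L.map_C_mul, ← map_add]
          congr 1; ring
      _ = _ := by
          rw [hP.apply_X_mul_mul_succ, hP.apply_X_mul_mul_succ, hP.apply_mul_self_succ (m + 1)]
          ring
  have hXlow : β m * L (X ^ 2 * P (m - 1) * P (m + 1)) = β m * L (P (m + 1) * P (m + 1)) := by
    cases m with
    | zero => simp [β, recurrenceCoeff]
    | succ j => rw [Nat.add_sub_cancel, hP.apply_X_pow_mul_mul_add 2 j]
  calc L (X ^ 3 * (P (m + 1) * P m))
      = L (X * P (m + 1) * (X * P (m + 1))) + β m * L (X ^ 2 * P (m - 1) * P (m + 1)) := by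
        rw [← L.map_C_mul, ← map_add,
          show X ^ 3 * (P (m + 1) * P m) = X ^ 2 * P (m + 1) * (X * P m) by ring, hrec]
        congr 1; ring
    _ = _ := by rw [hXX, hXlow]; ring

theorem apply_derivative_mul_succ (hP : IsMonicOrthogonal L P) (m : ℕ) :
    L (derivative (P (m + 1) * P m)) = (m + 1) * L (P m * P m) := by
  have hdeg : (derivative (P (m + 1))).natDegree ≤ m :=
    (natDegree_derivative_le _).trans (by rw [hP.natDegree_eq, Nat.add_sub_cancel])
  have hdeg' : (derivative (P m)).degree < ↑(m + 1) :=
    (degree_derivative_lt (hP.monic m).ne_zero).trans_eq (hP.degree_eq m)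
      |>.trans (by exact_mod_cast m.lt_succ_self)
  rw [derivative_mul, map_add, hP.apply_mul_eq_coeff_mul hdeg, coeff_derivative, hP.coeff_eq_one,
    mul_comm (P (m + 1)), hP.apply_mul_eq_zero_of_degree_lt hdeg', add_zero, one_mul]

theorem freud_equation [CharZero K] (hP : IsMonicOrthogonal L P)
    (hsymm : ∀ p, L (p.comp (-X)) = L p) {t : K}
    (hibp : ∀ p, L (derivative p) = 4 * L (X ^ 3 * p) - 2 * t * L (X * p)) (m : ℕ) :
    4 * recurrenceCoeff L P (m + 1) *
      (recurrenceCoeff L P m + recurrenceCoeff L P (m + 1) + recurrenceCoeff L P (m + 2) - t / 2)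
      = m + 1 := by
  have hX : L (X * (P (m + 1) * P m)) = L (P (m + 1) * P (m + 1)) := by
    rw [mul_comm (P (m + 1)), ← mul_assoc, hP.apply_X_mul_mul_succ]
  have h := hibp (P (m + 1) * P m)
  rw [hP.apply_derivative_mul_succ, hP.apply_X_pow_three_mul_mul_succ hsymm, hX,
    hP.apply_mul_self_succ m] at h
  apply mul_right_cancel₀ (hP.apply_mul_self_ne_zero m)
  linear_combination -h

end IsMonicOrthogonal

end Orthogonality

section FreudWeight

variable (t : ℝ)

-- `|x| ^ k ≤ k! e^|x|`, and `|x| - x⁴ + (t + 1) x² ≤ (t + 2)² / 4 + 1` since `|x| ≤ 1 + x²`.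
theorem norm_pow_mul_exp_le (k : ℕ) (x : ℝ) :
    ‖x ^ k * exp (-x ^ 4 + t * x ^ 2)‖ ≤ k ! * exp ((t + 2) ^ 2 / 4 + 1) * exp (-x ^ 2) := by
  have hpow : |x| ^ k ≤ k ! * exp |x| := by
    have := Real.pow_div_factorial_le_exp |x| (abs_nonneg x) k
    rwa [div_le_iff₀ (by positivity), mul_comm] at this
  have habs : |x| ≤ 1 + x ^ 2 := by nlinarith [sq_abs x, sq_nonneg (|x| - 1)]
  have hexp : |x| + (-x ^ 4 + t * x ^ 2) ≤ (t + 2) ^ 2 / 4 + 1 + -x ^ 2 := by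
    nlinarith [sq_nonneg (x ^ 2 - (t + 2) / 2)]
  calc ‖x ^ k * exp (-x ^ 4 + t * x ^ 2)‖ = |x| ^ k * exp (-x ^ 4 + t * x ^ 2) := by
        rw [norm_mul, norm_pow, Real.norm_eq_abs, Real.norm_of_nonneg (exp_pos _).le]
    _ ≤ k ! * exp |x| * exp (-x ^ 4 + t * x ^ 2) := by gcongr
    _ ≤ k ! * exp ((t + 2) ^ 2 / 4 + 1) * exp (-x ^ 2) := by
        rw [mul_assoc, mul_assoc, ← exp_add, ← exp_add]
        gcongr

theorem integrable_eval_mul_exp (p : ℝ[X]) :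
    Integrable fun x => p.eval x * exp (-x ^ 4 + t * x ^ 2) := by
  have hmono : ∀ k : ℕ, Integrable fun x : ℝ => x ^ k * exp (-x ^ 4 + t * x ^ 2) := fun k =>
    ((integrable_exp_neg_mul_sq one_pos).const_mul _).mono' (by fun_prop)
      (ae_of_all _ fun x => by simpa using norm_pow_mul_exp_le t k x)
  simp_rw [eval_eq_sum_range, Finset.sum_mul]
  exact integrable_finsetSum _ fun i _ => by simpa [mul_assoc] using (hmono i).const_mul (p.coeff i)

noncomputable def freudFunctional : ℝ[X] →ₗ[ℝ] ℝ where
  toFun p := ∫ x, p.eval x * exp (-x ^ 4 + t * x ^ 2)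
  map_add' p q := by
    simp only [eval_add, add_mul]
    exact integral_add (integrable_eval_mul_exp t p) (integrable_eval_mul_exp t q)
  map_smul' c p := by
    simp only [eval_smul, smul_eq_mul, mul_assoc, integral_const_mul, RingHom.id_apply]

theorem freudFunctional_apply (p : ℝ[X]) :
    freudFunctional t p = ∫ x, p.eval x * exp (-x ^ 4 + t * x ^ 2) := rfl

theorem freudFunctional_comp_neg_X (p : ℝ[X]) :
    freudFunctional t (p.comp (-X)) = freudFunctional t p := by
  rw [freudFunctional_apply, freudFunctional_apply, ← integral_neg_eq_self]
  simp [eval_comp, Even.neg_pow (by decide : Even 4), Even.neg_pow (by decide : Even 2)]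

theorem freudFunctional_mul_self_pos {p : ℝ[X]} (hp : p ≠ 0) :
    0 < freudFunctional t (p * p) := by
  obtain ⟨x, hx⟩ : ∃ x, ¬p.IsRoot x := (p.finite_setOfPred_isRoot hp).infinite_compl.nonempty
  refine integral_pos_of_integrable_nonneg_nonzero (x := x) (by fun_prop)
    (integrable_eval_mul_exp t (p * p)) (fun y => ?_) (by simpa [eval_mul] using hx)
  rw [Pi.zero_apply, eval_mul]
  exact mul_nonneg (mul_self_nonneg _) (exp_pos _).le

theorem hasDerivAt_eval_mul_exp (p : ℝ[X]) (x : ℝ) :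
    HasDerivAt (fun y => p.eval y * exp (-y ^ 4 + t * y ^ 2))
      ((derivative p - C 4 * X ^ 3 * p + C (2 * t) * X * p).eval x *
        exp (-x ^ 4 + t * x ^ 2)) x := by
  have hV := (hasDerivAt_pow 4 x).neg.add ((hasDerivAt_pow 2 x).const_mul t)
  refine ((p.hasDerivAt x).mul hV.exp).congr_deriv ?_
  simp only [eval_add, eval_sub, eval_mul, eval_C, eval_pow, eval_X, Pi.add_apply, Pi.neg_apply]
  push_cast
  ring

theorem freudFunctional_derivative (p : ℝ[X]) :
    freudFunctional t (derivative p) =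
      4 * freudFunctional t (X ^ 3 * p) - 2 * t * freudFunctional t (X * p) := by
  have hzero := integral_eq_zero_of_hasDerivAt_of_integrable (hasDerivAt_eval_mul_exp t p)
    (integrable_eval_mul_exp t _) (integrable_eval_mul_exp t p)
  rw [← freudFunctional_apply, map_add, map_sub, mul_assoc, mul_assoc, LinearMap.map_C_mul,
    LinearMap.map_C_mul] at hzero
  linarith

end FreudWeight

theorem stmt14 (t : ℝ) (P : ℕ → Polynomial ℝ)
    (hmonic : ∀ n, (P n).Monic) (hdeg : ∀ n, (P n).natDegree = n)
    (horth : ∀ j k, j ≠ k →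
      ∫ x : ℝ, (P j).eval x * (P k).eval x * Real.exp (-x ^ 4 + t * x ^ 2) = 0)
    (h : ℕ → ℝ) (hh : ∀ n, h n = ∫ x : ℝ, ((P n).eval x) ^ 2 * Real.exp (-x ^ 4 + t * x ^ 2))
    (β : ℕ → ℝ) (hβ0 : β 0 = 0) (hβ : ∀ n, β (n + 1) = h (n + 1) / h n)
    (n : ℕ) (hn : 1 ≤ n) :
    4 * β n * (β (n - 1) + β n + β (n + 1) - t / 2) = n := by
  have hP : IsMonicOrthogonal (freudFunctional t) P :=
    { monic := hmonic
      natDegree_eq := hdeg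
      apply_mul_eq_zero := fun j k hjk => by
        simpa [freudFunctional_apply, eval_mul] using horth j k hjk
      apply_mul_self_ne_zero := fun n => (freudFunctional_mul_self_pos t (hmonic n).ne_zero).ne' }
  have hh' : ∀ n, h n = freudFunctional t (P n * P n) := fun n => by
    simp [hh, freudFunctional_apply, eval_mul, sq]
  have hβL : β = recurrenceCoeff (freudFunctional t) P := by
    funext n
    cases n with
    | zero => exact hβ0
    | succ n => rw [hβ, hh', hh', recurrenceCoeff]
  obtain ⟨m, rfl⟩ := Nat.exists_eq_add_of_le' hn
  subst hβL
  simpa using hP.freud_equation (freudFunctional_comp_neg_X t) (freudFunctional_derivative t) m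
end
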